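/- arXiv:1707.03295 — 2 statements merged into one kernel-verified Lean document; each statement's English description precedes it below -/
import Mathlib

section
/- Let C be a finite quotienting lattice with period p, and let u, v be words with u^p ≤_C v. Then for every k ∈ ℕ and all m, m'_1, m'_2 ≥ 2^{k+1} − 1, we have u^{pm} ≤_k u^{p m'_1} v u^{p m'_2}, where ≤_k is the canonical preorder of the stratum Pol_k(C). -/
def IsLatticeClass {A : Type*} (C : Set (Set (List A))) : Prop :=
  ∅ ∈ C ∧ Set.univ ∈ C ∧ (∀ K L : Set (List A), K ∈ C → L ∈ C → K ∪ L ∈ C) ∧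
    (∀ K L : Set (List A), K ∈ C → L ∈ C → K ∩ L ∈ C)

def IsQuotienting {A : Type*} (C : Set (Set (List A))) : Prop :=
  ∀ L ∈ C, ∀ w : List A, {u | w ++ u ∈ L} ∈ C ∧ {u | u ++ w ∈ L} ∈ C

def CanPre {A : Type*} (C : Set (Set (List A))) (w w' : List A) : Prop :=
  ∀ L ∈ C, w ∈ L → w' ∈ L

inductive PolStep {A : Type*} (D : Set (List A) → Prop) : Set (List A) → Prop
  | base {L : Set (List A)} : D L → PolStep D L
  | mconcat {K L : Set (List A)} (a : A) : D K → D L →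
      PolStep D {w | ∃ u ∈ K, ∃ v ∈ L, w = u ++ a :: v}
  | union {K L : Set (List A)} : PolStep D K → PolStep D L → PolStep D (K ∪ L)
  | inter {K L : Set (List A)} : PolStep D K → PolStep D L → PolStep D (K ∩ L)
  | empty : PolStep D ∅
  | univ : PolStep D Set.univ

def Polk {A : Type*} (C : Set (Set (List A))) : ℕ → Set (List A) → Prop
  | 0 => fun L => L ∈ C
  | k + 1 => PolStep (Polk C k)

/-- Canonical preorder `≤_k` of the stratum `Pol_k(C)`. -/
def leK {A : Type*} (C : Set (Set (List A))) (k : ℕ) (w w' : List A) : Prop :=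
  ∀ L : Set (List A), Polk C k L → w ∈ L → w' ∈ L

/-- `u^n`: the `n`-th power of a word. -/
def wpow {A : Type*} (u : List A) : ℕ → List A
  | 0 => []
  | n + 1 => u ++ wpow u n



theorem wpow_add {A : Type*} (u : List A) (m n : ℕ) :
    wpow u (m + n) = wpow u m ++ wpow u n := by
  induction m with
  | zero => simp [wpow]
  | succ m ih =>
    have h : m + 1 + n = (m + n) + 1 := by omega
    rw [h]
    simp [wpow, ih]

theorem wpow_one {A : Type*} (u : List A) : wpow u 1 = u := by
  simp [wpow]

theorem wpow_split {A : Type*} {u x y : List A} {a : A} {n : ℕ}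
    (h : wpow u n = x ++ a :: y) :
    ∃ q r s, q + 1 ≤ n ∧ u = r ++ a :: s ∧ x = wpow u q ++ r ∧
      y = s ++ wpow u (n - q - 1) := by
  induction n generalizing x y with
  | zero => simp [wpow] at h
  | succ n ih =>
    have h' : u ++ wpow u n = x ++ a :: y := h
    rcases List.append_eq_append_iff.mp h' with ⟨w, hw1, hw2⟩ | ⟨w, hw1, hw2⟩
    · -- hw1 : x = u ++ w, hw2 : wpow u n = w ++ a :: y
      obtain ⟨q, r, s, hq, hu, hx, hy⟩ := ih hw2
      have hidx : n + 1 - (q + 1) - 1 = n - q - 1 := by omega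
      refine ⟨q + 1, r, s, by omega, hu, ?_, ?_⟩
      · rw [hw1, hx]
        rw [show q + 1 = 1 + q by omega, wpow_add, wpow_one, List.append_assoc]
      · rw [hidx, hy]
    · -- hw1 : u = x ++ w, hw2 : a :: y = w ++ wpow u n
      cases w with
      | nil =>
        have hw1' : u = x := by simpa using hw1
        have hw2' : a :: y = wpow u n := by simpa using hw2
        have h2 : wpow u n = ([] : List A) ++ a :: y := by simp [← hw2']
        obtain ⟨q, r, s, hq, hu, hx0, hy⟩ := ih h2
        have hr : wpow u q = [] ∧ r = [] := List.append_eq_nil_iff.mp hx0.symm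
        have hune : u = a :: s := by rw [hu, hr.2]; rfl
        have hq0 : q = 0 := by
          cases q with
          | zero => rfl
          | succ q' =>
            exfalso
            have h3 : u ++ wpow u q' = [] := hr.1
            have h4 : u = [] := (List.append_eq_nil_iff.mp h3).1
            rw [hune] at h4; exact List.cons_ne_nil _ _ h4
        have hidx : n + 1 - 1 - 1 = n - 0 - 1 := by omega
        refine ⟨1, [], s, by omega, by simpa using hune, ?_, ?_⟩
        · rw [← hw1', wpow_one]; simp
        · rw [hidx, hy, hq0]
      | cons c w' =>
        have h5 : a :: y = c :: (w' ++ wpow u n) := by simpa using hw2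
        have hac : a = c := by injection h5
        have hy' : y = w' ++ wpow u n := by injection h5
        have hidx : n + 1 - 0 - 1 = n := by omega
        refine ⟨0, x, w', by omega, ?_, by simp [wpow], ?_⟩
        · rw [hw1, hac]
        · rw [hidx, hy']


theorem polstep_quotL1 {A : Type*} {D : Set (List A) → Prop}
    (hD : ∀ L, D L → ∀ w : List A, D {z | w ++ z ∈ L})
    {L : Set (List A)} (hL : PolStep D L) (b : A) :
    PolStep D {z | b :: z ∈ L} := by
  induction hL with
  | @base L h =>
    exact .base (show D {z | b :: z ∈ L} by simpa using hD L h [b])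
  | @mconcat K L a hK hL =>
    have hset : {z | b :: z ∈ {w | ∃ x ∈ K, ∃ y ∈ L, w = x ++ a :: y}} =
        {w | ∃ x ∈ {x | b :: x ∈ K}, ∃ y ∈ L, w = x ++ a :: y} ∪
          {z | b = a ∧ [] ∈ K ∧ z ∈ L} := by
      ext z
      simp only [Set.mem_setOf_eq, Set.mem_union]
      constructor
      · rintro ⟨x, hx, y, hy, hzeq⟩
        cases x with
        | nil =>
          have h1 : b = a := by injection hzeq
          have h2 : z = y := by injection hzeq
          exact Or.inr ⟨h1, hx, h2 ▸ hy⟩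
        | cons c x' =>
          have hzeq' : b :: z = c :: (x' ++ a :: y) := by simpa using hzeq
          have h1 : b = c := by injection hzeq'
          have h2 : z = x' ++ a :: y := by injection hzeq'
          exact Or.inl ⟨x', show b :: x' ∈ K by rw [h1]; exact hx, y, hy, h2⟩
      · rintro (⟨x, hx, y, hy, rfl⟩ | ⟨rfl, hK0, hz⟩)
        · exact ⟨b :: x, hx, y, hy, by simp⟩
        · exact ⟨[], hK0, z, hz, by simp⟩
    rw [hset]
    refine .union (.mconcat a (show D {x | b :: x ∈ K} by simpa using hD K hK [b]) hL) ?_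
    by_cases hc : b = a ∧ [] ∈ K
    · have : {z | b = a ∧ [] ∈ K ∧ z ∈ L} = L := by ext z; simp [hc.1, hc.2]
      rw [this]; exact .base hL
    · have : {z | b = a ∧ [] ∈ K ∧ z ∈ L} = ∅ := by
        ext z; simp only [Set.mem_setOf_eq, Set.mem_empty_iff_false, iff_false]
        rintro ⟨h1, h2, _⟩; exact hc ⟨h1, h2⟩
      rw [this]; exact .empty
  | @union K L hK hL ihK ihL =>
    have : {z | b :: z ∈ K ∪ L} = {z | b :: z ∈ K} ∪ {z | b :: z ∈ L} := rfl
    rw [this]; exact .union ihK ihL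
  | @inter K L hK hL ihK ihL =>
    have : {z | b :: z ∈ K ∩ L} = {z | b :: z ∈ K} ∩ {z | b :: z ∈ L} := rfl
    rw [this]; exact .inter ihK ihL
  | empty =>
    have : {z : List A | b :: z ∈ (∅ : Set (List A))} = ∅ := rfl
    rw [this]; exact .empty
  | univ =>
    have : {z : List A | b :: z ∈ (Set.univ : Set (List A))} = Set.univ := rfl
    rw [this]; exact .univ

theorem polstep_quotR1 {A : Type*} {D : Set (List A) → Prop}
    (hD : ∀ L, D L → ∀ w : List A, D {z | z ++ w ∈ L})
    {L : Set (List A)} (hL : PolStep D L) (b : A) :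
    PolStep D {z | z ++ [b] ∈ L} := by
  induction hL with
  | @base L h => exact .base (hD L h [b])
  | @mconcat K L a hK hL =>
    have hset : {z | z ++ [b] ∈ {w | ∃ x ∈ K, ∃ y ∈ L, w = x ++ a :: y}} =
        {w | ∃ x ∈ K, ∃ y ∈ {y | y ++ [b] ∈ L}, w = x ++ a :: y} ∪
          {z | a = b ∧ [] ∈ L ∧ z ∈ K} := by
      ext z
      simp only [Set.mem_setOf_eq, Set.mem_union]
      constructor
      · rintro ⟨x, hx, y, hy, hzeq⟩
        rcases List.eq_nil_or_concat y with rfl | ⟨y₁, c, rfl⟩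
        · -- z ++ [b] = x ++ [a]
          have hlen : z = x ∧ [b] = [a] :=
            List.append_inj' hzeq (by simp)
          have hb : b = a := by
            have := hlen.2; injection this
          exact Or.inr ⟨hb.symm, hy, hlen.1 ▸ hx⟩
        · simp only [List.concat_eq_append] at hy hzeq
          have hzeq' : z ++ [b] = (x ++ a :: y₁) ++ [c] := by simpa using hzeq
          have hlen : z = x ++ a :: y₁ ∧ [b] = [c] :=
            List.append_inj' hzeq' (by simp)
          have hb : b = c := by have := hlen.2; injection this
          refine Or.inl ⟨x, hx, y₁, ?_, hlen.1⟩
          show y₁ ++ [b] ∈ L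
          rw [hb]; exact hy
      · rintro (⟨x, hx, y, hy, rfl⟩ | ⟨rfl, hL0, hz⟩)
        · exact ⟨x, hx, y ++ [b], hy, by simp⟩
        · exact ⟨z, hz, [], hL0, by simp⟩
    rw [hset]
    refine .union (.mconcat a hK (hD L hL [b])) ?_
    by_cases hc : a = b ∧ [] ∈ L
    · have : {z | a = b ∧ [] ∈ L ∧ z ∈ K} = K := by ext z; simp [hc.1, hc.2]
      rw [this]; exact .base hK
    · have : {z | a = b ∧ [] ∈ L ∧ z ∈ K} = ∅ := by
        ext z; simp only [Set.mem_setOf_eq, Set.mem_empty_iff_false, iff_false]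
        rintro ⟨h1, h2, _⟩; exact hc ⟨h1, h2⟩
      rw [this]; exact .empty
  | @union K L hK hL ihK ihL =>
    have : {z | z ++ [b] ∈ K ∪ L} = {z | z ++ [b] ∈ K} ∪ {z | z ++ [b] ∈ L} := rfl
    rw [this]; exact .union ihK ihL
  | @inter K L hK hL ihK ihL =>
    have : {z | z ++ [b] ∈ K ∩ L} = {z | z ++ [b] ∈ K} ∩ {z | z ++ [b] ∈ L} := rfl
    rw [this]; exact .inter ihK ihL
  | empty => exact .empty
  | univ =>
    have : {z : List A | z ++ [b] ∈ (Set.univ : Set (List A))} = Set.univ := rfl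
    rw [this]; exact .univ

theorem polstep_quotL {A : Type*} {D : Set (List A) → Prop}
    (hD : ∀ L, D L → ∀ w : List A, D {z | w ++ z ∈ L}) :
    ∀ (w : List A) (L : Set (List A)), PolStep D L → PolStep D {z | w ++ z ∈ L} := by
  intro w
  induction w with
  | nil => intro L hL; simpa using hL
  | cons b w ih =>
    intro L hL
    have h1 : PolStep D {z | b :: z ∈ L} := polstep_quotL1 hD hL b
    have h2 := ih _ h1
    simpa using h2

theorem polstep_quotR {A : Type*} {D : Set (List A) → Prop}
    (hD : ∀ L, D L → ∀ w : List A, D {z | z ++ w ∈ L}) :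
    ∀ (w : List A) (L : Set (List A)), PolStep D L → PolStep D {z | z ++ w ∈ L} := by
  intro w
  induction w with
  | nil => intro L hL; simpa using hL
  | cons b w ih =>
    intro L hL
    have h1 := ih L hL
    have h2 := polstep_quotR1 hD h1 b
    have hset : {z | z ++ [b] ∈ {z' | z' ++ w ∈ L}} = {z | z ++ b :: w ∈ L} := by
      ext z; simp [List.append_assoc]
    rw [hset] at h2
    exact h2

theorem polk_quot {A : Type*} {C : Set (Set (List A))} (hq : IsQuotienting C) :
    ∀ (k : ℕ) (L : Set (List A)), Polk C k L → ∀ w : List A,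
      Polk C k {z | w ++ z ∈ L} ∧ Polk C k {z | z ++ w ∈ L} := by
  intro k
  induction k with
  | zero => intro L hL w; exact hq L hL w
  | succ k ih =>
    intro L hL w
    exact ⟨polstep_quotL (fun L h w => (ih L h w).1) w L hL,
      polstep_quotR (fun L h w => (ih L h w).2) w L hL⟩

theorem Qlem {A : Type*} {C : Set (Set (List A))} (hq : IsQuotienting C)
    {p : ℕ} (hp : 1 ≤ p)
    (hper : ∀ (u : List A) (m m' : ℕ), 1 ≤ m → 1 ≤ m' →
      CanPre C (wpow u (p * m)) (wpow u (p * m')))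
    (u : List A) :
    ∀ k m m', 2 ^ (k + 1) - 1 ≤ m → 2 ^ (k + 1) - 1 ≤ m' →
      leK C k (wpow u (p * m)) (wpow u (p * m')) := by
  intro k
  induction k with
  | zero =>
    intro m m' hm hm' L hL hmem
    have hm1 : 1 ≤ m := by simpa using hm
    have hm1' : 1 ≤ m' := by simpa using hm'
    exact hper u m m' hm1 hm1' L hL hmem
  | succ k ih =>
    intro m m' hm hm' L hL
    have hpow : 1 ≤ 2 ^ (k + 1) := Nat.one_le_two_pow
    have h2 : 2 ^ (k + 1 + 1) = 2 ^ (k + 1) * 2 := pow_succ 2 (k + 1)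
    induction hL with
    | @base L h =>
      intro hmem
      exact ih m m' (by omega) (by omega) L h hmem
    | @mconcat K L' a hK hL' =>
      intro hmem
      obtain ⟨x, hx, y, hy, heq⟩ := hmem
      obtain ⟨q, r, s, hqn, hu, hxeq, hyeq⟩ := wpow_split heq
      have hp0 : 0 < p := hp
      set t := q % p with ht
      set j := q / p with hj
      have hqd : q = p * j + t := (Nat.div_add_mod q p).symm
      have htp : t < p := Nat.mod_lt _ hp0
      have hjm : j < m := by
        have h3 : p * j < p * m := by omega
        exact Nat.lt_of_mul_lt_mul_left h3
      set d := m - j - 1 with hd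
      have hmd : m = j + 1 + d := by omega
      have hsplit : p * m = p * j + p + p * d := by rw [hmd]; ring
      have hyd : y = (s ++ wpow u (p - t - 1)) ++ wpow u (p * d) := by
        rw [hyeq]
        have hidx : p * m - q - 1 = (p - t - 1) + p * d := by omega
        rw [hidx, wpow_add, List.append_assoc]
      have hK' : Polk C k {z | z ++ (wpow u t ++ r) ∈ K} :=
        (polk_quot hq k K hK (wpow u t ++ r)).2
      have hxK' : wpow u (p * j) ∈ {z | z ++ (wpow u t ++ r) ∈ K} := by
        show wpow u (p * j) ++ (wpow u t ++ r) ∈ K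
        have hxx : wpow u (p * j) ++ (wpow u t ++ r) = x := by
          rw [hxeq, hqd, wpow_add, List.append_assoc]
        rw [hxx]; exact hx
      have hL'' : Polk C k {z | (s ++ wpow u (p - t - 1)) ++ z ∈ L'} :=
        (polk_quot hq k L' hL' (s ++ wpow u (p - t - 1))).1
      have hyL'' : wpow u (p * d) ∈ {z | (s ++ wpow u (p - t - 1)) ++ z ∈ L'} := by
        show (s ++ wpow u (p - t - 1)) ++ wpow u (p * d) ∈ L'
        rw [← hyd]; exact hy
      have final : ∀ j' d', j' + 1 + d' = m' →
          wpow u (p * j') ∈ {z | z ++ (wpow u t ++ r) ∈ K} →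
          wpow u (p * d') ∈ {z | (s ++ wpow u (p - t - 1)) ++ z ∈ L'} →
          wpow u (p * m') ∈ {w | ∃ x ∈ K, ∃ y ∈ L', w = x ++ a :: y} := by
        intro j' d' hsum hj' hd'
        refine ⟨wpow u (p * j') ++ (wpow u t ++ r), hj',
          (s ++ wpow u (p - t - 1)) ++ wpow u (p * d'), hd', ?_⟩
        have hsplit' : p * m' = p * j' + p + p * d' := by rw [← hsum]; ring
        have harith : p * m' = (p * j' + t) + (1 + ((p - t - 1) + p * d')) := by omega
        rw [harith, wpow_add, wpow_add, wpow_add, wpow_add, wpow_one, hu]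
        simp [List.append_assoc]
      by_cases hc1 : j < 2 ^ (k + 1) - 1
      · exact final j (m' - j - 1) (by omega) hxK'
          (ih d (m' - j - 1) (by omega) (by omega) _ hL'' hyL'')
      · by_cases hc2 : d < 2 ^ (k + 1) - 1
        · exact final (m' - d - 1) d (by omega)
            (ih j (m' - d - 1) (by omega) (by omega) _ hK' hxK') hyL''
        · exact final (2 ^ (k + 1) - 1) (m' - (2 ^ (k + 1) - 1) - 1) (by omega)
            (ih j (2 ^ (k + 1) - 1) (by omega) (by omega) _ hK' hxK')
            (ih d (m' - (2 ^ (k + 1) - 1) - 1) (by omega) (by omega) _ hL'' hyL'')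
    | @union K L hK hL ihK ihL =>
      intro hmem
      rcases hmem with h | h
      · exact Or.inl (ihK h)
      · exact Or.inr (ihL h)
    | @inter K L hK hL ihK ihL =>
      intro hmem
      exact ⟨ihK hmem.1, ihL hmem.2⟩
    | empty => intro hmem; exact hmem.elim
    | univ => intro _; trivial

theorem Plem {A : Type*} {C : Set (Set (List A))} (hq : IsQuotienting C)
    {p : ℕ} (hp : 1 ≤ p)
    (hper : ∀ (u : List A) (m m' : ℕ), 1 ≤ m → 1 ≤ m' →
      CanPre C (wpow u (p * m)) (wpow u (p * m')))
    (u v : List A) (hv : CanPre C (wpow u p) v) :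
    ∀ k m m'₁ m'₂, 2 ^ (k + 1) - 1 ≤ m → 2 ^ (k + 1) - 1 ≤ m'₁ → 2 ^ (k + 1) - 1 ≤ m'₂ →
      leK C k (wpow u (p * m)) (wpow u (p * m'₁) ++ v ++ wpow u (p * m'₂)) := by
  intro k
  induction k with
  | zero =>
    intro m m1 m2 hm hm1 hm2 L hL hmem
    have hm' : 1 ≤ m := by simpa using hm
    have key : wpow u (p * (m1 + 1 + m2)) ∈ L :=
      hper u m (m1 + 1 + m2) hm' (by omega) L hL hmem
    have h1 := (hq L hL (wpow u (p * m1))).1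
    have h2 := (hq _ h1 (wpow u (p * m2))).2
    have hup : wpow u p ∈ {z | z ++ wpow u (p * m2) ∈ {z' | wpow u (p * m1) ++ z' ∈ L}} := by
      show wpow u (p * m1) ++ (wpow u p ++ wpow u (p * m2)) ∈ L
      have : p * (m1 + 1 + m2) = p * m1 + (p + p * m2) := by ring
      rw [this, wpow_add, wpow_add] at key
      simpa [List.append_assoc] using key
    have hvmem := hv _ h2 hup
    show (wpow u (p * m1) ++ v) ++ wpow u (p * m2) ∈ L
    simpa [List.append_assoc] using hvmem
  | succ k ih =>
    intro m m'₁ m'₂ hm hm1 hm2 L hL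
    have hpow : 1 ≤ 2 ^ (k + 1) := Nat.one_le_two_pow
    have h2 : 2 ^ (k + 1 + 1) = 2 ^ (k + 1) * 2 := pow_succ 2 (k + 1)
    induction hL with
    | @base L h =>
      intro hmem
      exact ih m m'₁ m'₂ (by omega) (by omega) (by omega) L h hmem
    | @mconcat K L' a hK hL' =>
      intro hmem
      obtain ⟨x, hx, y, hy, heq⟩ := hmem
      obtain ⟨q, r, s, hqn, hu, hxeq, hyeq⟩ := wpow_split heq
      have hp0 : 0 < p := hp
      set t := q % p with ht
      set j := q / p with hj
      have hqd : q = p * j + t := (Nat.div_add_mod q p).symm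
      have htp : t < p := Nat.mod_lt _ hp0
      have hjm : j < m := by
        have h3 : p * j < p * m := by omega
        exact Nat.lt_of_mul_lt_mul_left h3
      set d := m - j - 1 with hd
      have hmd : m = j + 1 + d := by omega
      have hsplit : p * m = p * j + p + p * d := by rw [hmd]; ring
      have hyd : y = (s ++ wpow u (p - t - 1)) ++ wpow u (p * d) := by
        rw [hyeq]
        have hidx : p * m - q - 1 = (p - t - 1) + p * d := by omega
        rw [hidx, wpow_add, List.append_assoc]
      have hK' : Polk C k {z | z ++ (wpow u t ++ r) ∈ K} :=
        (polk_quot hq k K hK (wpow u t ++ r)).2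
      have hxK' : wpow u (p * j) ∈ {z | z ++ (wpow u t ++ r) ∈ K} := by
        show wpow u (p * j) ++ (wpow u t ++ r) ∈ K
        have hxx : wpow u (p * j) ++ (wpow u t ++ r) = x := by
          rw [hxeq, hqd, wpow_add, List.append_assoc]
        rw [hxx]; exact hx
      have hL'' : Polk C k {z | (s ++ wpow u (p - t - 1)) ++ z ∈ L'} :=
        (polk_quot hq k L' hL' (s ++ wpow u (p - t - 1))).1
      have hyL'' : wpow u (p * d) ∈ {z | (s ++ wpow u (p - t - 1)) ++ z ∈ L'} := by
        show (s ++ wpow u (p - t - 1)) ++ wpow u (p * d) ∈ L'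
        rw [← hyd]; exact hy
      have finalR : ∀ j' d', j' + 1 + d' = m'₁ →
          wpow u (p * j') ∈ {z | z ++ (wpow u t ++ r) ∈ K} →
          wpow u (p * d') ++ v ++ wpow u (p * m'₂) ∈
            {z | (s ++ wpow u (p - t - 1)) ++ z ∈ L'} →
          wpow u (p * m'₁) ++ v ++ wpow u (p * m'₂) ∈
            {w | ∃ x ∈ K, ∃ y ∈ L', w = x ++ a :: y} := by
        intro j' d' hsum hj' hd'
        refine ⟨wpow u (p * j') ++ (wpow u t ++ r), hj',
          (s ++ wpow u (p - t - 1)) ++ (wpow u (p * d') ++ v ++ wpow u (p * m'₂)), hd', ?_⟩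
        have hsplit' : p * m'₁ = p * j' + p + p * d' := by rw [← hsum]; ring
        have harith : p * m'₁ = (p * j' + t) + (1 + ((p - t - 1) + p * d')) := by omega
        rw [harith, wpow_add, wpow_add, wpow_add, wpow_add, wpow_one, hu]
        simp [List.append_assoc]
      have finalL : ∀ j' d', j' + 1 + d' = m'₂ →
          wpow u (p * m'₁) ++ v ++ wpow u (p * j') ∈ {z | z ++ (wpow u t ++ r) ∈ K} →
          wpow u (p * d') ∈ {z | (s ++ wpow u (p - t - 1)) ++ z ∈ L'} →
          wpow u (p * m'₁) ++ v ++ wpow u (p * m'₂) ∈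
            {w | ∃ x ∈ K, ∃ y ∈ L', w = x ++ a :: y} := by
        intro j' d' hsum hj' hd'
        refine ⟨(wpow u (p * m'₁) ++ v ++ wpow u (p * j')) ++ (wpow u t ++ r), hj',
          (s ++ wpow u (p - t - 1)) ++ wpow u (p * d'), hd', ?_⟩
        have hsplit' : p * m'₂ = p * j' + p + p * d' := by rw [← hsum]; ring
        have harith : p * m'₂ = (p * j' + t) + (1 + ((p - t - 1) + p * d')) := by omega
        rw [harith, wpow_add, wpow_add, wpow_add, wpow_add, wpow_one, hu]
        simp [List.append_assoc]
      by_cases hc1 : j < 2 ^ (k + 1) - 1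
      · exact finalR j (m'₁ - j - 1) (by omega) hxK'
          (ih d (m'₁ - j - 1) m'₂ (by omega) (by omega) (by omega) _ hL'' hyL'')
      · by_cases hc2 : d < 2 ^ (k + 1) - 1
        · exact finalL (m'₂ - d - 1) d (by omega)
            (ih j m'₁ (m'₂ - d - 1) (by omega) (by omega) (by omega) _ hK' hxK') hyL''
        · exact finalR (2 ^ (k + 1) - 1) (m'₁ - (2 ^ (k + 1) - 1) - 1) (by omega)
            (Qlem hq hp hper u k j (2 ^ (k + 1) - 1) (by omega) (by omega) _ hK' hxK')
            (ih d (m'₁ - (2 ^ (k + 1) - 1) - 1) m'₂ (by omega) (by omega) (by omega) _ hL'' hyL'')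
    | @union K L hK hL ihK ihL =>
      intro hmem
      rcases hmem with h | h
      · exact Or.inl (ihK h)
      · exact Or.inr (ihL h)
    | @inter K L hK hL ihK ihL =>
      intro hmem
      exact ⟨ihK hmem.1, ihL hmem.2⟩
    | empty => intro hmem; exact hmem.elim
    | univ => intro _; trivial

/-- If `p` is a period of the finite quotienting lattice `C` and `u^p ≤_C v`, then
`u^{pm} ≤_k u^{pm'_1} v u^{pm'_2}` as soon as `m, m'_1, m'_2 ≥ 2^{k+1} - 1`. -/
theorem stmt8 {A : Type*} [Fintype A] (C : Set (Set (List A)))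
    (hfin : C.Finite) (hlat : IsLatticeClass C) (hq : IsQuotienting C)
    (p : ℕ) (hp : 1 ≤ p)
    (hper : ∀ (u : List A) (m m' : ℕ), 1 ≤ m → 1 ≤ m' →
      CanPre C (wpow u (p * m)) (wpow u (p * m')))
    (u v : List A) (hv : CanPre C (wpow u p) v)
    (k : ℕ) (m m'₁ m'₂ : ℕ)
    (hm : 2 ^ (k + 1) - 1 ≤ m) (hm₁ : 2 ^ (k + 1) - 1 ≤ m'₁) (hm₂ : 2 ^ (k + 1) - 1 ≤ m'₂) :
    leK C k (wpow u (p * m)) (wpow u (p * m'₁) ++ v ++ wpow u (p * m'₂)) := by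
  exact Plem hq hp hper u v hv k m m'₁ m'₂ hm hm₁ hm₂
end

section
/- Let α : A* → M be a morphism into a finite monoid, and let w be a word admitting an α-factorization forest of height at most h and idempotent height at most m. Then every infix of w (any u with w = v1 u v2) admits an α-factorization forest of height at most h + 2 and idempotent height at most m. -/
/-- `FF α w h m`: the word `w` admits an `α`-factorization forest of height at most `h`
and idempotent height at most `m`. Leaves are the empty word or single letters; a binary
node concatenates two subforests; an idempotent node concatenates at least three
subforests whose labels all have the same idempotent image under `α`. -/
inductive FF {A M : Type*} [Monoid M] (α : List A → M) : List A → ℕ → ℕ → Prop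
  | empty (h m : ℕ) : FF α [] h m
  | letter (a : A) (h m : ℕ) : FF α [a] h m
  | binary {w₁ w₂ : List A} {h m : ℕ} :
      FF α w₁ h m → FF α w₂ h m → FF α (w₁ ++ w₂) (h + 1) m
  | idem {h m : ℕ} (ws : List (List A)) (e : M) :
      3 ≤ ws.length → e * e = e →
      (∀ w ∈ ws, FF α w h m) → (∀ w ∈ ws, α w = e) →
      FF α ws.flatten (h + 1) (m + 1)

theorem FF.mono {A M : Type*} [Monoid M] {α : List A → M} {w : List A} {h m : ℕ}
    (hw : FF α w h m) : ∀ {h' m' : ℕ}, h ≤ h' → m ≤ m' → FF α w h' m' := by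
  induction hw with
  | empty => exact fun _ _ => FF.empty _ _
  | letter a => exact fun _ _ => FF.letter a _ _
  | binary h1 h2 ih1 ih2 =>
    intro h' m' hh hm
    cases h' with
    | zero => omega
    | succ h'' => exact FF.binary (ih1 (by omega) hm) (ih2 (by omega) hm)
  | idem ws e hlen he hmem hα ih =>
    intro h' m' hh hm
    cases h' with
    | zero => omega
    | succ h'' =>
      cases m' with
      | zero => omega
      | succ m'' =>
        exact FF.idem ws e hlen he (fun x hx => ih x hx (by omega) (by omega)) hα

theorem flatten_split {A : Type*} {l : List (List A)} {p s : List A}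
    (h : l.flatten = p ++ s) :
    (p = l.flatten ∧ s = []) ∨
    ∃ l₁ p' s' l₂, l = l₁ ++ (p' ++ s') :: l₂ ∧ p = l₁.flatten ++ p' ∧
      s = s' ++ l₂.flatten := by
  induction l generalizing p s with
  | nil =>
    left
    simp only [List.flatten_nil] at h
    obtain ⟨rfl, rfl⟩ := List.append_eq_nil_iff.mp h.symm
    simp
  | cons w l ih =>
    rw [List.flatten_cons] at h
    rcases List.append_eq_append_iff.mp h with ⟨a', ha1, ha2⟩ | ⟨c', hc1, hc2⟩
    · rcases ih ha2 with ⟨rfl, rfl⟩ | ⟨l₁, p', s', l₂, rfl, rfl, rfl⟩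
      · left; simp [ha1]
      · right
        exact ⟨w :: l₁, p', s', l₂, by simp, by simp [ha1], rfl⟩
    · right
      exact ⟨[], p, c', l, by simp [hc1], by simp, hc2⟩

theorem FF.flatten_short {A M : Type*} [Monoid M] {α : List A → M} {l : List (List A)}
    {h m : ℕ} (e : M) (he : e * e = e)
    (hmem : ∀ x ∈ l, FF α x h m) (hα : ∀ x ∈ l, α x = e) :
    FF α l.flatten (h + 1) (m + 1) := by
  match l with
  | [] => exact FF.empty _ _
  | [a] =>
    simpa using (hmem a (by simp)).mono (Nat.le_succ _) (Nat.le_succ _)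
  | [a, b] =>
    have := FF.binary ((hmem a (by simp)).mono le_rfl (Nat.le_succ _))
      ((hmem b (by simp)).mono le_rfl (Nat.le_succ _))
    simpa using this
  | a :: b :: c :: rest =>
    exact FF.idem _ e (by simp only [List.length_cons]; omega) he hmem hα

theorem FF.prefix {A M : Type*} [Monoid M] {α : List A → M} {w : List A} {h m : ℕ}
    (hw : FF α w h m) : ∀ p s : List A, w = p ++ s → FF α p (h + 1) m := by
  induction hw with
  | empty h m =>
    intro p s hps
    obtain ⟨rfl, rfl⟩ := List.append_eq_nil_iff.mp hps.symm
    exact FF.empty _ _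
  | letter a h m =>
    intro p s hps
    cases p with
    | nil => exact FF.empty _ _
    | cons x xs =>
      simp only [List.cons_append, List.cons.injEq] at hps
      obtain ⟨rfl, hxs⟩ := hps
      obtain ⟨rfl, rfl⟩ := List.append_eq_nil_iff.mp hxs.symm
      exact FF.letter _ _ _
  | binary h1 h2 ih1 ih2 =>
    intro p s hps
    rcases List.append_eq_append_iff.mp hps with ⟨a', ha1, ha2⟩ | ⟨c', hc1, hc2⟩
    · subst ha1
      exact FF.binary (h1.mono (Nat.le_succ _) le_rfl) (ih2 a' s ha2)
    · exact (ih1 p c' hc1).mono (Nat.le_succ _) le_rfl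
  | idem ws e hlen he hmem hα ih =>
    intro p s hps
    rcases flatten_split hps with ⟨rfl, rfl⟩ | ⟨l₁, p', s', l₂, hws, rfl, rfl⟩
    · exact (FF.idem ws e hlen he hmem hα).mono (Nat.le_succ _) le_rfl
    · have hp' :=
        ih (p' ++ s') (by simp [hws]) p' s' rfl
      have hflat :=
        FF.flatten_short (l := l₁) e he (fun x hx => hmem x (by simp [hws, hx]))
          (fun x hx => hα x (by simp [hws, hx]))
      exact FF.binary hflat (hp'.mono le_rfl (Nat.le_succ _))

theorem FF.suffix {A M : Type*} [Monoid M] {α : List A → M} {w : List A} {h m : ℕ}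
    (hw : FF α w h m) : ∀ p s : List A, w = p ++ s → FF α s (h + 1) m := by
  induction hw with
  | empty h m =>
    intro p s hps
    obtain ⟨rfl, rfl⟩ := List.append_eq_nil_iff.mp hps.symm
    exact FF.empty _ _
  | letter a h m =>
    intro p s hps
    cases p with
    | nil =>
      rw [List.nil_append] at hps
      subst hps
      exact FF.letter _ _ _
    | cons x xs =>
      simp only [List.cons_append, List.cons.injEq] at hps
      obtain ⟨rfl, hxs⟩ := hps
      obtain ⟨rfl, rfl⟩ := List.append_eq_nil_iff.mp hxs.symm
      exact FF.empty _ _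
  | binary h1 h2 ih1 ih2 =>
    intro p s hps
    rcases List.append_eq_append_iff.mp hps with ⟨a', ha1, ha2⟩ | ⟨c', hc1, hc2⟩
    · exact (ih2 a' s ha2).mono (Nat.le_succ _) le_rfl
    · subst hc2
      exact FF.binary (ih1 p c' hc1) (h2.mono (Nat.le_succ _) le_rfl)
  | idem ws e hlen he hmem hα ih =>
    intro p s hps
    rcases flatten_split hps with ⟨rfl, rfl⟩ | ⟨l₁, p', s', l₂, hws, rfl, rfl⟩
    · exact FF.empty _ _
    · have hs' :=
        ih (p' ++ s') (by simp [hws]) p' s' rfl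
      have hflat :=
        FF.flatten_short (l := l₂) e he (fun x hx => hmem x (by simp [hws, hx]))
          (fun x hx => hα x (by simp [hws, hx]))
      exact FF.binary (hs'.mono le_rfl (Nat.le_succ _)) hflat

/-- Every infix of a word admitting an `α`-factorization forest of height at most `h`
and idempotent height at most `m` admits one of height at most `h + 2` and idempotent
height at most `m`. -/
theorem stmt10 {A M : Type*} [Monoid M] [Finite M] (α : List A → M)
    (hone : α [] = 1) (hmul : ∀ u v : List A, α (u ++ v) = α u * α v)
    (w : List A) (h m : ℕ) (hw : FF α w h m)
    (v₁ u v₂ : List A) (hsplit : w = v₁ ++ u ++ v₂) :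
    FF α u (h + 2) m := by
  have h1 : FF α (u ++ v₂) (h + 1) m :=
    hw.suffix v₁ (u ++ v₂) (by simpa [List.append_assoc] using hsplit)
  exact h1.prefix u v₂ rfl
end
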